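/- arXiv:2212.07755 — 3 statements merged into one kernel-verified Lean document; each statement's English description precedes it below -/
import Mathlib

section
/- Let h : ℂ → ℂ be defined by h(z) = (4/27)·(z²−z+1)³/(z²·(1−z)²). For every z ∈ ℂ with z ≠ 0 and z ≠ 1, if the complex derivative of h at z vanishes, then h(z) = 0 or h(z) = 1. (In other words, all finite critical values of the rational function h lie in {0, 1}, so that h branches only over 0, 1 and ∞ and is a Belyi function.) -/
noncomputable def h : ℂ → ℂ :=
  fun z => (4 / 27) * (z ^ 2 - z + 1) ^ 3 / (z ^ 2 * (1 - z) ^ 2)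

/-!
Write `p = z² - z + 1`, `q = z(1 - z)` and `r = (2z - 1)(z - 2)(z + 1)`, so that `h = 4p³ / 27q²`.
Since `q' = -p'`, the quotient rule gives `h' = 4p²p'(3q + 2p) / 27q³ = -4p²r / 27q³`, and the
identity `4p³ - 27q² = r²` gives `h - 1 = r² / 27q²`. Hence a critical point of `h` off the poles
is a root of `p`, where `h = 0`, or a root of `r`, where `h = 1`.
-/

theorem hasDerivAt_h {z : ℂ} (hz₀ : z ≠ 0) (hz₁ : z ≠ 1) :
    HasDerivAt h
      (-(4 / 27) * (z ^ 2 - z + 1) ^ 2 * ((2 * z - 1) * (z - 2) * (z + 1)) / (z * (1 - z)) ^ 3) z := by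
  have hq : z * (1 - z) ≠ 0 := mul_ne_zero hz₀ (sub_ne_zero.2 hz₁.symm)
  have hnum : HasDerivAt (fun z : ℂ => 4 / 27 * (z ^ 2 - z + 1) ^ 3)
      (4 / 27 * (3 * (z ^ 2 - z + 1) ^ 2 * (2 * z - 1))) z :=
    ((((hasDerivAt_pow 2 z).sub (hasDerivAt_id z)).add_const 1).fun_pow 3).const_mul
      (4 / 27 : ℂ) |>.congr_deriv (by simp only [Pi.sub_apply, id]; ring)
  have hden : HasDerivAt (fun z : ℂ => z ^ 2 * (1 - z) ^ 2) (2 * z * (1 - z) * (1 - 2 * z)) z :=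
    (hasDerivAt_pow 2 z).mul (((hasDerivAt_id z).const_sub 1).fun_pow 2) |>.congr_deriv
      (by simp only [id]; ring)
  refine (hnum.div hden (by rw [← mul_pow]; exact pow_ne_zero 2 hq)).congr_deriv ?_
  field_simp
  ring

theorem h_sub_one {z : ℂ} (hz₀ : z ≠ 0) (hz₁ : z ≠ 1) :
    h z - 1 = ((2 * z - 1) * (z - 2) * (z + 1)) ^ 2 / (27 * (z * (1 - z)) ^ 2) := by
  have h1z : (1 : ℂ) - z ≠ 0 := sub_ne_zero.2 hz₁.symm
  unfold h
  field_simp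
  ring

theorem stmt_0 :
    ∀ z : ℂ, z ≠ 0 → z ≠ 1 → deriv h z = 0 → h z = 0 ∨ h z = 1 := by
  intro z hz₀ hz₁ hcrit
  have hq : z * (1 - z) ≠ 0 := mul_ne_zero hz₀ (sub_ne_zero.2 hz₁.symm)
  rw [(hasDerivAt_h hz₀ hz₁).deriv, div_eq_zero_iff, or_iff_left (pow_ne_zero 3 hq)] at hcrit
  obtain hp | hr : z ^ 2 - z + 1 = 0 ∨ (2 * z - 1) * (z - 2) * (z + 1) = 0 := by
    simpa using hcrit
  · left
    simp only [h, hp]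
    ring
  · right
    rw [← sub_eq_zero, h_sub_one hz₀ hz₁, hr]
    simp
end

section
/- For every real number t with t ≠ 0 and t ≠ 1, the real number (4/27)·(t²−t+1)³/(t²·(1−t)²) is greater than or equal to 1. (Thus the rational function h maps the real line minus {0,1} into the ray [1, ∞), i.e. the edges of the barycentrically subdivided dessin lie over the segment from 1 to ∞.) -/
theorem stmt_9 :
    ∀ t : ℝ, t ≠ 0 → t ≠ 1 →
      1 ≤ (4 / 27) * (t ^ 2 - t + 1) ^ 3 / (t ^ 2 * (1 - t) ^ 2) := by
  intro t h0 h1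
  have h1' : 1 - t ≠ 0 := sub_ne_zero.mpr (Ne.symm h1)
  have hden : 0 < t ^ 2 * (1 - t) ^ 2 := by positivity
  rw [le_div_iff₀ hden, one_mul]
  nlinarith [sq_nonneg ((t ^ 2 - t - 2) * (2 * t - 1)), sq_nonneg (t ^ 2 - t - 2), sq_nonneg (2 * t - 1)]
end

section
/- The improper integral ∫₁^∞ t^(−3/4)·(t−1)^(−3/4) dt converges and equals (1/√2) · ∫₀¹ t^(−3/4)·(1−t)^(−3/4) dt. -/
/-!
Substituting `t = 1 / u` turns the integral over `(1, ∞)` into the Beta integral `B(1/2, 1/4)`,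
while the integral over `(0, 1)` is `B(1/4, 1/4)`. Through `B(p, q) = Γ(p) Γ(q) / Γ(p + q)` their
ratio is `Γ(1/2)² / (Γ(1/4) Γ(3/4)) = π / (π √2)`, by `Γ(1/2) = √π` and the reflection formula.
-/

open MeasureTheory Set Real

lemma ofReal_rpow_mul_one_sub_rpow {p q t : ℝ} (ht : t ∈ Ioo 0 1) :
    ((t ^ (p - 1) * (1 - t) ^ (q - 1) : ℝ) : ℂ) =
      (t : ℂ) ^ ((p : ℂ) - 1) * (1 - (t : ℂ)) ^ ((q : ℂ) - 1) := by
  rw [Complex.ofReal_mul, Complex.ofReal_cpow ht.1.le, Complex.ofReal_cpow (sub_nonneg.2 ht.2.le)]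
  push_cast
  rfl

lemma integrableOn_Ioo_rpow_mul_one_sub_rpow {p q : ℝ} (hp : 0 < p) (hq : 0 < q) :
    IntegrableOn (fun t : ℝ => t ^ (p - 1) * (1 - t) ^ (q - 1)) (Ioo 0 1) := by
  have hconv := Complex.betaIntegral_convergent (u := p) (v := q) (by simpa) (by simpa)
  rw [intervalIntegrable_iff_integrableOn_Ioc_of_le zero_le_one] at hconv
  refine (integrableOn_congr_fun (fun t ht => ?_) measurableSet_Ioo).mp
    (hconv.mono_set Ioo_subset_Ioc_self).re
  rw [← ofReal_rpow_mul_one_sub_rpow ht, RCLike.re_to_complex, Complex.ofReal_re]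

lemma integral_Ioo_rpow_mul_one_sub_rpow {p q : ℝ} (hp : 0 < p) (hq : 0 < q) :
    ∫ t in Ioo 0 1, t ^ (p - 1) * (1 - t) ^ (q - 1) = Gamma p * Gamma q / Gamma (p + q) := by
  apply Complex.ofReal_injective
  calc ((∫ t in Ioo 0 1, t ^ (p - 1) * (1 - t) ^ (q - 1) : ℝ) : ℂ)
      = ∫ t in Ioc (0 : ℝ) 1, (t : ℂ) ^ ((p : ℂ) - 1) * (1 - (t : ℂ)) ^ ((q : ℂ) - 1) := by
        rw [← integral_complex_ofReal, integral_Ioc_eq_integral_Ioo]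
        exact setIntegral_congr_fun measurableSet_Ioo fun t ht => ofReal_rpow_mul_one_sub_rpow ht
    _ = Complex.betaIntegral p q := by
        rw [Complex.betaIntegral, intervalIntegral.integral_of_le zero_le_one]
    _ = _ := by
        rw [Complex.betaIntegral_eq_Gamma_mul_div _ _ (by simpa) (by simpa), ← Complex.ofReal_add,
          Complex.Gamma_ofReal, Complex.Gamma_ofReal, Complex.Gamma_ofReal]
        push_cast
        rfl

lemma image_inv_Ioo_zero_one : (fun u : ℝ => u⁻¹) '' Ioo 0 1 = Ioi 1 := by
  rw [image_inv_eq_inv, inv_Ioo_0_left one_pos, inv_one]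

lemma hasDerivWithinAt_inv_Ioo {u : ℝ} (hu : u ∈ Ioo 0 1) :
    HasDerivWithinAt (fun y : ℝ => y⁻¹) (-(u ^ 2)⁻¹) (Ioo 0 1) u :=
  (hasDerivAt_inv hu.1.ne').hasDerivWithinAt

section InvSubstitution

variable {E : Type*} [NormedAddCommGroup E] [NormedSpace ℝ E]

theorem integrableOn_Ioi_one_iff_comp_inv (g : ℝ → E) :
    IntegrableOn g (Ioi 1) ↔ IntegrableOn (fun u => (u ^ 2)⁻¹ • g u⁻¹) (Ioo 0 1) := by
  rw [← image_inv_Ioo_zero_one, integrableOn_image_iff_integrableOn_abs_deriv_smul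
    measurableSet_Ioo (fun u hu => hasDerivWithinAt_inv_Ioo hu) inv_injective.injOn]
  simp only [abs_neg, abs_inv, abs_sq]

theorem integral_Ioi_one_eq_integral_comp_inv (g : ℝ → E) :
    ∫ t in Ioi 1, g t = ∫ u in Ioo 0 1, (u ^ 2)⁻¹ • g u⁻¹ := by
  rw [← image_inv_Ioo_zero_one, integral_image_eq_integral_abs_deriv_smul
    measurableSet_Ioo (fun u hu => hasDerivWithinAt_inv_Ioo hu) inv_injective.injOn]
  simp only [abs_neg, abs_inv, abs_sq]

end InvSubstitution

lemma inv_sq_mul_rpow_inv_mul_inv_sub_one_rpow {a b u : ℝ} (hu : u ∈ Ioo 0 1) :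
    (u ^ 2)⁻¹ * (u⁻¹ ^ a * (u⁻¹ - 1) ^ b) = u ^ (-a - b - 2) * (1 - u) ^ b := by
  obtain ⟨hu0, hu1⟩ := hu
  have hsub : u⁻¹ - 1 = (1 - u) * u⁻¹ := by field_simp
  rw [hsub, mul_rpow (sub_nonneg.2 hu1.le) (inv_nonneg.2 hu0.le), inv_rpow hu0.le,
    inv_rpow hu0.le, ← rpow_natCast, ← rpow_neg hu0.le, ← rpow_neg hu0.le, ← rpow_neg hu0.le,
    show -a - b - 2 = -((2 : ℕ) : ℝ) + -a + -b by push_cast; ring, rpow_add hu0, rpow_add hu0]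
  ring

theorem integrableOn_Ioi_one_rpow_mul_sub_one_rpow {a b : ℝ} (hb : -1 < b) (hab : a + b < -1) :
    IntegrableOn (fun t : ℝ => t ^ a * (t - 1) ^ b) (Ioi 1) := by
  rw [integrableOn_Ioi_one_iff_comp_inv]
  refine (integrableOn_congr_fun (fun u hu => ?_) measurableSet_Ioo).mpr
    (integrableOn_Ioo_rpow_mul_one_sub_rpow (p := -a - b - 1) (q := b + 1)
      (by linarith) (by linarith))
  rw [smul_eq_mul, inv_sq_mul_rpow_inv_mul_inv_sub_one_rpow hu]
  ring_nf

theorem integral_Ioi_one_rpow_mul_sub_one_rpow {a b : ℝ} (hb : -1 < b) (hab : a + b < -1) :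
    ∫ t in Ioi 1, t ^ a * (t - 1) ^ b = Gamma (-a - b - 1) * Gamma (b + 1) / Gamma (-a) := by
  rw [integral_Ioi_one_eq_integral_comp_inv]
  calc ∫ u in Ioo (0 : ℝ) 1, (u ^ 2)⁻¹ • (u⁻¹ ^ a * (u⁻¹ - 1) ^ b)
      = ∫ u in Ioo 0 1, u ^ ((-a - b - 1) - 1) * (1 - u) ^ ((b + 1) - 1) := by
        refine setIntegral_congr_fun measurableSet_Ioo fun u hu => ?_
        rw [smul_eq_mul, inv_sq_mul_rpow_inv_mul_inv_sub_one_rpow hu]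
        ring_nf
    _ = Gamma (-a - b - 1) * Gamma (b + 1) / Gamma (-a) := by
        rw [integral_Ioo_rpow_mul_one_sub_rpow (by linarith) (by linarith)]
        ring_nf

lemma Gamma_one_quarter_mul_Gamma_three_quarters : Gamma (1 / 4) * Gamma (3 / 4) = π * √2 := by
  have h := Gamma_mul_Gamma_one_sub (1 / 4)
  rw [show π * (1 / 4) = π / 4 by ring, sin_pi_div_four] at h
  norm_num at h
  rw [h]
  field_simp
  exact (sq_sqrt zero_le_two).symm

theorem stmt_17 :
    IntegrableOn (fun t : ℝ => t ^ (-3 / 4 : ℝ) * (t - 1) ^ (-3 / 4 : ℝ))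
      (Set.Ioi (1 : ℝ)) ∧
    ∫ t in Set.Ioi (1 : ℝ), t ^ (-3 / 4 : ℝ) * (t - 1) ^ (-3 / 4 : ℝ) =
      (1 / Real.sqrt 2) *
        ∫ t in Set.Ioo (0 : ℝ) 1, t ^ (-3 / 4 : ℝ) * (1 - t) ^ (-3 / 4 : ℝ) := by
  have hb : (-1 : ℝ) < -3 / 4 := by norm_num
  have hab : (-3 / 4 : ℝ) + -3 / 4 < -1 := by norm_num
  refine ⟨integrableOn_Ioi_one_rpow_mul_sub_one_rpow hb hab, ?_⟩
  have hJ := integral_Ioo_rpow_mul_one_sub_rpow (p := 1 / 4) (q := 1 / 4)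
    (by norm_num) (by norm_num)
  rw [integral_Ioi_one_rpow_mul_sub_one_rpow hb hab]
  norm_num at hJ ⊢
  rw [hJ, Gamma_one_half_eq]
  field_simp
  rw [sq_sqrt pi_pos.le, Gamma_one_quarter_mul_Gamma_three_quarters]
end
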